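/- arXiv:1905.06466 — 3 statements merged into one kernel-verified Lean document; each statement's English description precedes it below -/
import Mathlib

section
/- For any sequence of real numbers z_1, ..., z_n satisfying 0 ≤ z_m ≤ Z_{m-1} := max{1, z_1 + ... + z_{m-1}} for all m, it holds that the sum over m = 1 to n of z_m / Z_{m-1} is at most 1 + 2 log(Z_n). -/
lemma key_t_le_two_log (t : ℝ) (h0 : 0 ≤ t) (h1 : t ≤ 1) :
    t ≤ 2 * Real.log (1 + t) := by
  have hpos : (0:ℝ) < 1 + t := by linarith
  have h3 : 0 < 1 - t/2 := by linarith
  have hE : (1 - t/2) * Real.exp (t/2) ≤ 1 := by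
    have h2 := Real.add_one_le_exp (-(t/2))
    have hmul : Real.exp (t/2) * Real.exp (-(t/2)) = 1 := by
      rw [← Real.exp_add]; ring_nf; exact Real.exp_zero
    nlinarith [Real.exp_pos (t/2)]
  have hE' : Real.exp (t/2) ≤ 1 + t := by
    nlinarith [Real.exp_pos (t/2), mul_nonneg h0 (sub_nonneg.2 h1)]
  have h7 : t/2 ≤ Real.log (1+t) := (Real.le_log_iff_exp_le hpos).2 hE'
  linarith

/-- For any sequence of reals `z 0, …, z (n-1)` with `0 ≤ z m ≤ Z m` where
`Z m = max 1 (z 0 + ⋯ + z (m-1))`, the sum of `z m / Z m` is at most `1 + 2 log (Z n)`. -/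
theorem sum_div_le_one_add_two_log
    (n : ℕ) (z Z : ℕ → ℝ)
    (hZ : ∀ m, Z m = max 1 (∑ i ∈ Finset.range m, z i))
    (hz : ∀ m < n, 0 ≤ z m ∧ z m ≤ Z m) :
    ∑ m ∈ Finset.range n, z m / Z m ≤ 1 + 2 * Real.log (Z n) := by
  have main : ∀ N, (∀ m < N, 0 ≤ z m ∧ z m ≤ Z m) →
      ∑ m ∈ Finset.range N, z m / Z m ≤
        min (∑ i ∈ Finset.range N, z i) 1 + 2 * Real.log (Z N) := by
    intro N
    induction N with
    | zero => intro _; simp [hZ 0]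
    | succ n ih =>
      intro h
      have ihn := ih (fun m hm => h m (Nat.lt_succ_of_lt hm))
      have hSn1 : ∑ i ∈ Finset.range (n+1), z i = (∑ i ∈ Finset.range n, z i) + z n :=
        Finset.sum_range_succ z n
      set S : ℕ → ℝ := fun k => ∑ i ∈ Finset.range k, z i with hS
      have hzn := h n (Nat.lt_succ_self n)
      have hSpos : 0 ≤ S n :=
        Finset.sum_nonneg (fun i hi => (h i (Nat.lt_succ_of_lt (Finset.mem_range.1 hi))).1)
      have hZn : Z n = max 1 (S n) := hZ n
      have hZn1 : Z (n+1) = max 1 (S (n+1)) := hZ (n+1)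
      rw [Finset.sum_range_succ]
      suffices hstep : z n / Z n ≤ (min (S (n+1)) 1 - min (S n) 1) +
          2 * (Real.log (Z (n+1)) - Real.log (Z n)) by
        have : min (S (n+1)) 1 = min (∑ i ∈ Finset.range (n+1), z i) 1 := rfl
        linarith
      have hsum : S (n+1) = S n + z n := hSn1
      by_cases hc : S (n+1) ≤ 1
      · have h1 : S n ≤ 1 := by linarith [hzn.1]
        have e1 : Z n = 1 := by rw [hZn, max_eq_left h1]
        have e2 : Z (n+1) = 1 := by rw [hZn1, max_eq_left hc]
        rw [e1, e2, min_eq_left hc, min_eq_left h1, Real.log_one, div_one]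
        linarith
      · push_neg at hc
        have e2 : Z (n+1) = S (n+1) := by rw [hZn1, max_eq_right hc.le]
        have m2 : min (S (n+1)) 1 = 1 := min_eq_right hc.le
        by_cases hb : 1 ≤ S n
        · have e1 : Z n = S n := by rw [hZn, max_eq_right hb]
          have m1 : min (S n) 1 = 1 := min_eq_right hb
          have hSnpos : 0 < S n := lt_of_lt_of_le one_pos hb
          have t0 : 0 ≤ z n / S n := div_nonneg hzn.1 hSnpos.le
          have t1 : z n / S n ≤ 1 := by
            rw [div_le_one hSnpos, ← e1]; exact hzn.2
          have hk := key_t_le_two_log _ t0 t1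
          have hlog : Real.log (S (n+1)) - Real.log (S n) = Real.log (1 + z n / S n) := by
            rw [← Real.log_div (by linarith) hSnpos.ne']
            congr 1
            field_simp
            linarith
          rw [e1, e2, m1, m2, hlog]
          linarith
        · push_neg at hb
          have e1 : Z n = 1 := by rw [hZn, max_eq_left hb.le]
          have m1 : min (S n) 1 = S n := min_eq_left hb.le
          have t0 : 0 ≤ S (n+1) - 1 := by linarith
          have t1 : S (n+1) - 1 ≤ 1 := by
            have hz1 : z n ≤ 1 := by rw [← e1]; exact hzn.2
            linarith
          have hk := key_t_le_two_log _ t0 t1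
          have h8 : (1:ℝ) + (S (n+1) - 1) = S (n+1) := by ring
          rw [h8] at hk
          rw [e1, e2, m1, m2, Real.log_one, div_one]
          linarith
  linarith [main n hz, min_le_right (∑ i ∈ Finset.range n, z i) (1:ℝ)]
end

section
/- For any sequence of real numbers z_1, ..., z_n satisfying 0 ≤ z_m ≤ Z_{m-1} := max{1, z_1 + ... + z_{m-1}} for all m, it holds that the sum over m = 1 to n of z_m / sqrt(Z_{m-1}) is at most (√2 + 1)·√(Z_n). -/
lemma step_aux (a b d : ℝ) (ha : 1 ≤ a) (hab : a ≤ b) (hb2 : b ≤ 2 * a) (hd : 0 ≤ d) :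
    ((b - a) + d) / Real.sqrt a ≤ (Real.sqrt 2 + 1) * (Real.sqrt b - Real.sqrt a) + d := by
  have ha0 : (0:ℝ) ≤ a := by linarith
  have hb0 : (0:ℝ) ≤ b := by linarith
  have hsa : 1 ≤ Real.sqrt a := by
    rw [show (1:ℝ) = Real.sqrt 1 by simp]
    exact Real.sqrt_le_sqrt ha
  have hsa0 : 0 < Real.sqrt a := by linarith
  have hsab : Real.sqrt a ≤ Real.sqrt b := Real.sqrt_le_sqrt hab
  have hsb2 : Real.sqrt b ≤ Real.sqrt 2 * Real.sqrt a := by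
    rw [← Real.sqrt_mul (by norm_num : (0:ℝ) ≤ 2)]
    exact Real.sqrt_le_sqrt hb2
  have hsa2 : Real.sqrt a ^ 2 = a := Real.sq_sqrt ha0
  have hsb2' : Real.sqrt b ^ 2 = b := Real.sq_sqrt hb0
  rw [div_le_iff₀ hsa0]
  nlinarith [mul_nonneg hd (sub_nonneg.2 hsa), sub_nonneg.2 hsab,
    mul_nonneg (sub_nonneg.2 hsab) (sub_nonneg.2 hsb2)]

/-- For any sequence of reals `z 0, …, z (n-1)` with `0 ≤ z m ≤ Z m` where
`Z m = max 1 (z 0 + ⋯ + z (m-1))`, the sum of `z m / √(Z m)` is at most `(√2 + 1) √(Z n)`. -/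
theorem sum_div_sqrt_le
    (n : ℕ) (z Z : ℕ → ℝ)
    (hZ : ∀ m, Z m = max 1 (∑ i ∈ Finset.range m, z i))
    (hz : ∀ m < n, 0 ≤ z m ∧ z m ≤ Z m) :
    ∑ m ∈ Finset.range n, z m / Real.sqrt (Z m)
      ≤ (Real.sqrt 2 + 1) * Real.sqrt (Z n) := by
  set S : ℕ → ℝ := fun m => ∑ i ∈ Finset.range m, z i with hS
  set f : ℕ → ℝ := fun m => (Real.sqrt 2 + 1) * Real.sqrt (Z m) + min (S m) 1 with hf
  have hid : ∀ k, Z k + min (S k) 1 = S k + 1 := by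
    intro k
    rw [hZ k, max_comm]
    exact max_add_min _ 1
  have hZ1 : ∀ k, 1 ≤ Z k := fun k => by rw [hZ k]; exact le_max_left _ _
  have hSZ : ∀ k, S k ≤ Z k := fun k => by rw [hZ k]; exact le_max_right _ _
  have key : ∀ m ∈ Finset.range n,
      z m / Real.sqrt (Z m) ≤ f (m + 1) - f m := by
    intro m hm
    rw [Finset.mem_range] at hm
    obtain ⟨hz0, hzZ⟩ := hz m hm
    have hSsucc : S (m + 1) = S m + z m := Finset.sum_range_succ z m
    have hmono : Z m ≤ Z (m + 1) := by
      rw [hZ m, hZ (m + 1)]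
      refine max_le_max le_rfl ?_
      show S m ≤ S (m + 1)
      rw [hSsucc]; linarith
    have h2 : Z (m + 1) ≤ 2 * Z m := by
      rw [hZ (m + 1)]
      refine max_le (by linarith [hZ1 m]) ?_
      show S (m + 1) ≤ 2 * Z m
      rw [hSsucc]
      linarith [hSZ m]
    have hd0 : 0 ≤ min (S (m + 1)) 1 - min (S m) 1 := by
      have : S m ≤ S (m + 1) := by rw [hSsucc]; linarith
      have := min_le_min this (le_refl (1:ℝ))
      linarith
    have hzeq : z m = (Z (m + 1) - Z m) + (min (S (m + 1)) 1 - min (S m) 1) := by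
      have h1 := hid m
      have h2 := hid (m + 1)
      linarith
    calc z m / Real.sqrt (Z m)
        = ((Z (m + 1) - Z m) + (min (S (m + 1)) 1 - min (S m) 1)) / Real.sqrt (Z m) := by
          rw [← hzeq]
      _ ≤ (Real.sqrt 2 + 1) * (Real.sqrt (Z (m + 1)) - Real.sqrt (Z m))
            + (min (S (m + 1)) 1 - min (S m) 1) :=
          step_aux _ _ _ (hZ1 m) hmono h2 hd0
      _ = f (m + 1) - f m := by simp only [hf]; ring
  have hsum := Finset.sum_le_sum key
  rw [Finset.sum_range_sub f] at hsum
  have hZ0 : Z 0 = 1 := by rw [hZ 0]; simp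
  have hS0 : S 0 = 0 := by simp [hS]
  have hf0 : f 0 = (Real.sqrt 2 + 1) + 0 := by
    simp [hf, hZ0, hS0, Real.sqrt_one]
  have hminn : min (S n) 1 ≤ 1 := min_le_right _ _
  have h2n : (0:ℝ) ≤ Real.sqrt 2 := Real.sqrt_nonneg 2
  have : f n = (Real.sqrt 2 + 1) * Real.sqrt (Z n) + min (S n) 1 := rfl
  linarith [hsum, hf0.symm ▸ hsum]
end

section
/- Let α ∈ [0, 1) and C > 0. Suppose a sequence of real numbers (ρ_j)_{j≥1} satisfies ρ_1 ≥ C^{1/(1-α)} and ρ_{j+1} ≥ ρ_j + C·ρ_j^α for all j ≥ 1. Then for all j ≥ 1, ρ_j ≥ 2^{-α/(1-α)²} · (C·(1-α)·(j-1))^{1/(1-α)}. -/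
open Real

lemma bernoulli_key {p t : ℝ} (hp0 : 0 < p) (hp1 : p ≤ 1) (ht0 : 0 < t) (ht1 : t ≤ 1) :
    1 + 2 ^ (p - 1) * p * t ≤ (1 + t) ^ p := by
  have h1t : (0:ℝ) < 1 + t := by linarith
  have hs : (-1:ℝ) ≤ -(t / (1 + t)) := by
    have : t / (1 + t) ≤ 1 := by
      rw [div_le_one h1t]; linarith
    linarith
  have hB := rpow_one_add_le_one_add_mul_self hs hp0.le hp1
  have heq : (1:ℝ) + -(t / (1 + t)) = (1 + t)⁻¹ := by field_simp; ring
  rw [heq, Real.inv_rpow h1t.le] at hB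
  set A : ℝ := (1 + t) ^ p with hA
  have hApos : 0 < A := Real.rpow_pos_of_pos h1t p
  -- hB : A⁻¹ ≤ 1 + p * -(t / (1 + t))
  have h1 : 1 ≤ A * (1 - p * t / (1 + t)) := by
    have := mul_le_mul_of_nonneg_left hB hApos.le
    rw [mul_inv_cancel₀ hApos.ne'] at this
    calc (1:ℝ) ≤ A * (1 + p * -(t / (1 + t))) := this
      _ = A * (1 - p * t / (1 + t)) := by ring
  -- A / (1+t) = (1+t)^(p-1) ≥ 2^(p-1)
  have h2 : (2:ℝ) ^ (p - 1) ≤ A / (1 + t) := by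
    have : A / (1 + t) = (1 + t) ^ (p - 1) := by
      rw [hA, ← Real.rpow_sub_one h1t.ne']
    rw [this]
    exact Real.rpow_le_rpow_of_nonpos h1t (by linarith) (by linarith)
  have h3 : 1 + p * t * (A / (1 + t)) ≤ A := by
    have : A * (1 - p * t / (1 + t)) = A - p * t * (A / (1 + t)) := by
      field_simp
    rw [this] at h1; linarith
  have h4 : 2 ^ (p - 1) * p * t ≤ p * t * (A / (1 + t)) := by
    have hpt : 0 ≤ p * t := by positivity
    nlinarith [h2]
  linarith

/-- Recursive growth lemma: if `ρ 1 ≥ C^(1/(1-α))` and `ρ (j+1) ≥ ρ j + C ρ j ^ α`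
for all `j ≥ 1`, then `ρ j ≥ 2^(-α/(1-α)²) (C (1-α) (j-1))^(1/(1-α))` for all `j ≥ 1`. -/
theorem recursive_growth
    (α C : ℝ) (hα0 : 0 ≤ α) (hα1 : α < 1) (hC : 0 < C)
    (ρ : ℕ → ℝ)
    (hpos : ∀ j : ℕ, 1 ≤ j → 0 < ρ j)
    (h1 : C ^ ((1 : ℝ) / (1 - α)) ≤ ρ 1)
    (hrec : ∀ j : ℕ, 1 ≤ j → ρ j + C * ρ j ^ α ≤ ρ (j + 1)) :
    ∀ j : ℕ, 1 ≤ j →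
      (2 : ℝ) ^ (-(α / (1 - α) ^ 2)) * (C * (1 - α) * ((j : ℝ) - 1)) ^ ((1 : ℝ) / (1 - α))
        ≤ ρ j := by
  have h1α : (0:ℝ) < 1 - α := by linarith
  set c : ℝ := 2 ^ (-α) * ((1 - α) * C) with hc
  have hcpos : 0 < c := by positivity
  -- lower bound ρ j ≥ C^(1/(1-α))
  have hlow : ∀ j : ℕ, 1 ≤ j → C ^ ((1:ℝ) / (1 - α)) ≤ ρ j := by
    intro j hj
    induction j with
    | zero => omega
    | succ n ih =>
      rcases Nat.lt_or_ge 1 (n+1) with h | h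
      · have hn : 1 ≤ n := by omega
        have := hrec n hn
        have hpn := hpos n hn
        have : ρ n ≤ ρ (n+1) := le_trans (by nlinarith [Real.rpow_pos_of_pos hpn α]) this
        exact le_trans (ih hn) this
      · have : n = 0 := by omega
        subst this; exact h1
  -- main induction: ρ j ^ (1-α) ≥ C + c*(j-1)
  have hmain : ∀ j : ℕ, 1 ≤ j → C + c * ((j:ℝ) - 1) ≤ ρ j ^ (1 - α) := by
    intro j hj
    induction j with
    | zero => omega
    | succ n ih =>
      rcases Nat.lt_or_ge 1 (n+1) with h | h
      · have hn : 1 ≤ n := by omega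
        have hpn := hpos n hn
        set x := ρ n with hx
        have hxC : C ^ ((1:ℝ) / (1 - α)) ≤ x := hlow n hn
        have hx1a : C ≤ x ^ (1 - α) := by
          calc C = (C ^ ((1:ℝ)/(1-α))) ^ (1 - α) := by
                rw [← Real.rpow_mul hC.le, one_div, inv_mul_cancel₀ h1α.ne', Real.rpow_one]
            _ ≤ x ^ (1 - α) :=
                Real.rpow_le_rpow (Real.rpow_pos_of_pos hC _).le hxC h1α.le
        set t : ℝ := C * x ^ (α - 1) with ht
        have hxa1 : x ^ (α - 1) = (x ^ (1 - α))⁻¹ := by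
          rw [← Real.rpow_neg hpn.le]; ring_nf
        have ht0 : 0 < t := by
          have := Real.rpow_pos_of_pos hpn (α - 1); positivity
        have ht1 : t ≤ 1 := by
          rw [ht, hxa1]
          have hx1apos : 0 < x ^ (1 - α) := Real.rpow_pos_of_pos hpn _
          rw [← div_eq_mul_inv, div_le_one hx1apos]; exact hx1a
        have hxt : x + C * x ^ α = x * (1 + t) := by
          have : x ^ (α - 1) * x = x ^ α := by
            nth_rewrite 2 [← Real.rpow_one x]
            rw [← Real.rpow_add hpn]; ring_nf
          rw [ht]; nlinarith [this]
        have hkey := bernoulli_key h1α (by linarith : (1:ℝ) - α ≤ 1) ht0 ht1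
        have hstep : x ^ (1 - α) + c ≤ (x * (1 + t)) ^ (1 - α) := by
          rw [Real.mul_rpow hpn.le (by linarith : (0:ℝ) ≤ 1 + t)]
          have htx : t * x ^ (1 - α) = C := by
            rw [ht, hxa1]
            field_simp
          have hx1apos : 0 < x ^ (1 - α) := Real.rpow_pos_of_pos hpn _
          have := mul_le_mul_of_nonneg_left hkey hx1apos.le
          calc x ^ (1 - α) + c
              = x ^ (1 - α) * (1 + 2 ^ (1 - α - 1) * (1 - α) * t) := by
                have h2a : (2:ℝ) ^ (1 - α - 1) = 2 ^ (-α) := by norm_num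
                rw [h2a, hc]
                nlinarith [htx]
            _ ≤ x ^ (1 - α) * (1 + t) ^ (1 - α) := this
        have hmono : (x * (1 + t)) ^ (1 - α) ≤ ρ (n+1) ^ (1 - α) := by
          apply Real.rpow_le_rpow (by positivity) _ h1α.le
          rw [← hxt]; exact hrec n hn
        have := ih hn
        have hcast : ((n:ℝ) + 1) - 1 = ((n:ℝ) - 1) + 1 := by ring
        push_cast
        rw [hcast, mul_add, mul_one]
        linarith
      · have : n = 0 := by omega
        subst this
        push_cast
        calc C + c * ((1:ℝ) - 1) = C := by ring
          _ ≤ ρ 1 ^ (1 - α) := by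
            calc C = (C ^ ((1:ℝ)/(1-α))) ^ (1 - α) := by
                  rw [← Real.rpow_mul hC.le, one_div, inv_mul_cancel₀ h1α.ne', Real.rpow_one]
              _ ≤ ρ 1 ^ (1 - α) :=
                  Real.rpow_le_rpow (Real.rpow_pos_of_pos hC _).le h1 h1α.le
  -- conclude
  intro j hj
  have hpj := hpos j hj
  have hj1 : (0:ℝ) ≤ (j:ℝ) - 1 := by
    have : (1:ℝ) ≤ (j:ℝ) := by exact_mod_cast hj
    linarith
  have h2 : c * ((j:ℝ) - 1) ≤ ρ j ^ (1 - α) := le_trans (by nlinarith [hmain j hj]) (hmain j hj)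
  have h3 : (c * ((j:ℝ) - 1)) ^ ((1:ℝ)/(1-α)) ≤ ρ j := by
    have := Real.rpow_le_rpow (by positivity) h2 (by positivity : (0:ℝ) ≤ 1/(1-α))
    rwa [← Real.rpow_mul hpj.le, mul_one_div, div_self h1α.ne', Real.rpow_one] at this
  have hsplit : (c * ((j:ℝ) - 1)) ^ ((1:ℝ)/(1-α))
      = (2:ℝ) ^ (-α / (1 - α)) * (C * (1 - α) * ((j:ℝ) - 1)) ^ ((1:ℝ)/(1-α)) := by
    have hx : c * ((j:ℝ) - 1) = 2 ^ (-α) * (C * (1 - α) * ((j:ℝ) - 1)) := by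
      rw [hc]; ring
    rw [hx, Real.mul_rpow (by positivity) (by positivity),
      ← Real.rpow_mul (by norm_num : (0:ℝ) ≤ 2), mul_one_div]
  have hconst : (2:ℝ) ^ (-(α / (1 - α) ^ 2)) ≤ (2:ℝ) ^ (-α / (1 - α)) := by
    apply Real.rpow_le_rpow_left_iff (by norm_num : (1:ℝ) < 2) |>.2
    rw [neg_div]
    have : α / (1 - α) ≤ α / (1 - α) ^ 2 := by
      rw [div_le_div_iff₀ h1α (by positivity)]
      nlinarith [mul_nonneg (mul_nonneg hα0 hα0) h1α.le]
    linarith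
  have hXnn : (0:ℝ) ≤ (C * (1 - α) * ((j:ℝ) - 1)) ^ ((1:ℝ)/(1-α)) := by positivity
  calc (2:ℝ) ^ (-(α / (1 - α) ^ 2)) * (C * (1 - α) * ((j:ℝ) - 1)) ^ ((1:ℝ)/(1-α))
      ≤ (2:ℝ) ^ (-α / (1 - α)) * (C * (1 - α) * ((j:ℝ) - 1)) ^ ((1:ℝ)/(1-α)) :=
        mul_le_mul_of_nonneg_right hconst hXnn
    _ = (c * ((j:ℝ) - 1)) ^ ((1:ℝ)/(1-α)) := hsplit.symm
    _ ≤ ρ j := h3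
end
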